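/- For every {0,1} matrix M of size n×n, there exists a {0,1} matrix M' of size at most (n+n²)×(n+n²) such that per M' = per M and every column of M' has at most three nonzero entries. -/

import Mathlib

open Finset

/-- The permanent of a square matrix. -/
noncomputable def perm {n : ℕ} (M : Matrix (Fin n) (Fin n) ℝ) : ℝ :=
  ∑ σ : Equiv.Perm (Fin n), ∏ i, M i (σ i)

namespace PermSparse
noncomputable def perm' {α : Type*} [DecidableEq α] [Fintype α] (M : Matrix α α ℝ) : ℝ :=
  ∑ σ : Equiv.Perm α, ∏ i, M i (σ i)

lemma perm'_submatrix {α β : Type*} [DecidableEq α] [Fintype α] [DecidableEq β] [Fintype β]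
    (e : β ≃ α) (M : Matrix α α ℝ) : perm' (M.submatrix e e) = perm' M := by
  unfold perm'
  rw [← Equiv.sum_comp (Equiv.permCongr e) (fun τ => ∏ i, M i (τ i))]
  refine Finset.sum_congr rfl fun σ _ => ?_
  rw [← Equiv.prod_comp e (fun i => M i ((Equiv.permCongr e σ) i))]
  refine Finset.prod_congr rfl fun j _ => ?_
  simp [Matrix.submatrix, Equiv.permCongr_apply]

variable {n : ℕ}
abbrev Idx (n : ℕ) := Fin n ⊕ (Fin n × Fin n)
def colOf (j : Fin n) (m : ℕ) : Idx n :=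
  if h : m - 1 < n ∧ m ≠ 0 then Sum.inr (⟨m - 1, h.1⟩, j) else Sum.inl j
def bIndex : Idx n → ℕ
  | Sum.inl _ => 0
  | Sum.inr (k, _) => k.val + 1
def gadget : Idx n → Fin n
  | Sum.inl j => j
  | Sum.inr (_, j) => j
lemma colOf_zero (j : Fin n) : colOf j 0 = Sum.inl j := by simp [colOf]
lemma colOf_succ (j : Fin n) (m : ℕ) (h : m < n) :
    colOf j (m + 1) = Sum.inr (⟨m, h⟩, j) := by simp [colOf, h]
lemma bIndex_colOf (j : Fin n) (m : ℕ) (hm : m ≤ n) : bIndex (colOf j m) = m := by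
  rcases Nat.eq_zero_or_pos m with h | h
  · subst h; rw [colOf_zero]; rfl
  · obtain ⟨d, rfl⟩ : ∃ d, m = d + 1 := ⟨m - 1, by omega⟩
    rw [colOf_succ _ _ (by omega)]; rfl
lemma gadget_colOf (j : Fin n) (m : ℕ) : gadget (colOf j m) = j := by
  unfold colOf; split <;> rfl
lemma colOf_inj {j1 j2 : Fin n} {m1 m2 : ℕ} (h1 : m1 ≤ n) (h2 : m2 ≤ n)
    (h : colOf j1 m1 = colOf j2 m2) : j1 = j2 ∧ m1 = m2 := by
  constructor
  · have := congrArg gadget h; rwa [gadget_colOf, gadget_colOf] at this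
  · have := congrArg bIndex h; rwa [bIndex_colOf _ _ h1, bIndex_colOf _ _ h2] at this

def gFun (σ : Equiv.Perm (Fin n)) : Idx n → Idx n
  | Sum.inl i => Sum.inr (i, σ i)
  | Sum.inr (k, j) => colOf j (if k.val ≤ (σ.symm j).val then k.val else k.val + 1)

lemma gFun_inr_gadget (σ : Equiv.Perm (Fin n)) (k j : Fin n) :
    gadget (gFun σ (Sum.inr (k, j))) = j := by
  show gadget (colOf _ _) = _; rw [gadget_colOf]

lemma gFun_inr_bIndex (σ : Equiv.Perm (Fin n)) (k j : Fin n) :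
    bIndex (gFun σ (Sum.inr (k, j))) =
      (if k.val ≤ (σ.symm j).val then k.val else k.val + 1) := by
  show bIndex (colOf _ _) = _
  rw [bIndex_colOf]
  have := k.isLt; split <;> omega

lemma gFun_inj (σ : Equiv.Perm (Fin n)) : Function.Injective (gFun σ) := by
  intro x y h
  have hg := congrArg gadget h
  have hb := congrArg bIndex h
  rcases x with i | ⟨k, j⟩ <;> rcases y with i' | ⟨k', j'⟩
  · have h1 : σ i = σ i' := hg
    have h2 : i.val + 1 = i'.val + 1 := hb
    rw [Fin.ext (by omega : i.val = i'.val)]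
  · exfalso
    have hσ : σ i = j' := by rw [show σ i = gadget (gFun σ (Sum.inl i)) from rfl, hg,
      gFun_inr_gadget]
    rw [gFun_inr_bIndex] at hb
    have hsymm : (σ.symm j') = i := by rw [← hσ]; simp
    rw [hsymm] at hb
    have hcheat : bIndex (gFun σ (Sum.inl i)) = i.val + 1 := rfl
    rw [hcheat] at hb
    split at hb <;> omega
  · exfalso
    have hσ : σ i' = j := by rw [show σ i' = gadget (gFun σ (Sum.inl i')) from rfl, ← hg,
      gFun_inr_gadget]
    rw [gFun_inr_bIndex] at hb
    have hsymm : (σ.symm j) = i' := by rw [← hσ]; simp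
    rw [hsymm] at hb
    have hcheat : bIndex (gFun σ (Sum.inl i')) = i'.val + 1 := rfl
    rw [hcheat] at hb
    split at hb <;> omega
  · have hj : j = j' := by rw [← gFun_inr_gadget σ k j, ← gFun_inr_gadget σ k' j', hg]
    subst hj
    rw [gFun_inr_bIndex, gFun_inr_bIndex] at hb
    have : k = k' := Fin.ext (by split at hb <;> split at hb <;> omega)
    rw [this]

noncomputable def φ (σ : Equiv.Perm (Fin n)) : Equiv.Perm (Idx n) :=
  Equiv.ofBijective (gFun σ) (Finite.injective_iff_bijective.mp (gFun_inj σ))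

lemma φ_apply (σ : Equiv.Perm (Fin n)) (x : Idx n) : φ σ x = gFun σ x := rfl

lemma φ_inj : Function.Injective (φ (n := n)) := by
  intro σ1 σ2 h
  ext i
  have h2 : (Sum.inr (i, σ1 i) : Idx n) = Sum.inr (i, σ2 i) :=
    congrArg (fun π : Equiv.Perm (Idx n) => π (Sum.inl i)) h
  exact congrArg Fin.val (Prod.mk.injEq .. ▸ (Sum.inr.inj h2)).2


def M' (M : Matrix (Fin n) (Fin n) ℝ) : Matrix (Idx n) (Idx n) ℝ := fun x y =>
  match x, y with
  | Sum.inl _, Sum.inl _ => 0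
  | Sum.inl i, Sum.inr (k, j) => if k = i then M i j else 0
  | Sum.inr (k, j), Sum.inl j' => if k.val = 0 ∧ j = j' then 1 else 0
  | Sum.inr (k, j), Sum.inr (k', j') =>
      if j = j' ∧ (k' = k ∨ k'.val + 1 = k.val) then 1 else 0


lemma prodA (M : Matrix (Fin n) (Fin n) ℝ) (σ : Equiv.Perm (Fin n)) :
    ∏ x, M' M x (gFun σ x) = ∏ i, M i (σ i) := by
  rw [Fintype.prod_sum_type]
  have h2 : ∏ p : Fin n × Fin n, M' M (Sum.inr p) (gFun σ (Sum.inr p)) = 1 := by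
    apply Finset.prod_eq_one
    rintro ⟨k, j⟩ -
    show M' M (Sum.inr (k, j))
        (colOf j (if k.val ≤ (σ.symm j).val then k.val else k.val + 1)) = 1
    split
    · rcases Nat.eq_zero_or_pos k.val with h0 | h0
      · rw [h0, colOf_zero]; simp [M', h0]
      · obtain ⟨d, hd⟩ : ∃ d, k.val = d + 1 := ⟨k.val - 1, by omega⟩
        rw [hd, colOf_succ _ _ (by omega : d < n)]
        simp [M', hd]
    · rw [colOf_succ _ _ k.isLt]
      simp [M']
  rw [h2, mul_one]
  exact Finset.prod_congr rfl fun i _ => by simp [M', gFun]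


lemma surj (M : Matrix (Fin n) (Fin n) ℝ) (π : Equiv.Perm (Idx n))
    (hP : ∏ x, M' M x (π x) ≠ 0) : ∃ σ : Equiv.Perm (Fin n), π = φ σ := by
  classical
  have hfac : ∀ x, M' M x (π x) ≠ 0 := fun x =>
    Finset.prod_ne_zero_iff.mp hP x (Finset.mem_univ x)
  -- step 1: rows `inl i` go to gadget cells in row-index i
  have h1 : ∀ i : Fin n, ∃ j, π (Sum.inl i) = Sum.inr (i, j) := by
    intro i
    have hni := hfac (Sum.inl i)
    rcases hx : π (Sum.inl i) with j' | ⟨k, j⟩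
    · rw [hx] at hni; exact absurd rfl hni
    · rw [hx] at hni
      refine ⟨j, ?_⟩
      have hk : k = i := by
        by_contra hne
        apply hni
        show (if k = i then M i j else 0) = 0
        simp [hne]
      rw [hk]
  choose σ0 hσ0 using h1
  -- step 2: rows `inr (k, j)` stay in gadget j and move down at most one slot
  have h2 : ∀ k j : Fin n, (π (Sum.inr (k, j)) = Sum.inl j ∧ k.val = 0) ∨
      ∃ k' : Fin n, π (Sum.inr (k, j)) = Sum.inr (k', j) ∧
        (k' = k ∨ k'.val + 1 = k.val) := by
    intro k j
    have hni := hfac (Sum.inr (k, j))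
    rcases hx : π (Sum.inr (k, j)) with j' | ⟨k', j''⟩
    · rw [hx] at hni
      have : k.val = 0 ∧ j = j' := by
        by_contra hc
        apply hni
        show (if k.val = 0 ∧ j = j' then 1 else 0) = 0
        simp [hc]
      exact Or.inl ⟨by rw [this.2], this.1⟩
    · rw [hx] at hni
      have hcond : j = j'' ∧ (k' = k ∨ k'.val + 1 = k.val) := by
        by_contra hc
        apply hni
        show (if j = j'' ∧ (k' = k ∨ k'.val + 1 = k.val) then 1 else 0) = 0
        simp only [ite_eq_right_iff, one_ne_zero]
        intro hcc; exact absurd hcc hc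
      exact Or.inr ⟨k', by rw [hcond.1], hcond.2⟩
  set f : Fin n → Fin n → ℕ := fun k j => bIndex (π (Sum.inr (k, j))) with hf
  have hcol : ∀ k j : Fin n, π (Sum.inr (k, j)) = colOf j (f k j) := by
    intro k j
    rcases h2 k j with ⟨h, _⟩ | ⟨k', h, _⟩
    · rw [hf]; simp only; rw [h]; rw [show bIndex (Sum.inl j : Idx n) = 0 from rfl, colOf_zero]
    · rw [hf]; simp only; rw [h]
      rw [show bIndex (Sum.inr (k', j) : Idx n) = k'.val + 1 from rfl,
        colOf_succ _ _ k'.isLt]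
  have hrange : ∀ k j : Fin n, f k j = k.val ∨ f k j = k.val + 1 := by
    intro k j
    rcases h2 k j with ⟨h, h0⟩ | ⟨k', h, hk'⟩
    · left; rw [hf]; simp only; rw [h, h0]; rfl
    · rcases hk' with rfl | hk'
      · right; rw [hf]; simp only; rw [h]; rfl
      · left; rw [hf]; simp only; rw [h]
        show k'.val + 1 = k.val
        exact hk'
  have hle : ∀ k j : Fin n, f k j ≤ n := by
    intro k j; have := k.isLt; rcases hrange k j with h | h <;> omega
  have hinj : ∀ (j k1 k2 : Fin n), f k1 j = f k2 j → k1 = k2 := by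
    intro j k1 k2 h
    have : π (Sum.inr (k1, j)) = π (Sum.inr (k2, j)) := by
      rw [hcol, hcol, h]
    have := π.injective this
    exact (Prod.mk.injEq .. ▸ (Sum.inr.inj this)).1
  have havoid : ∀ (i k : Fin n), f k (σ0 i) ≠ i.val + 1 := by
    intro i k hcontra
    have h3 : π (Sum.inr (k, σ0 i)) = Sum.inr (i, σ0 i) := by
      rw [hcol, hcontra, colOf_succ _ _ i.isLt]
    have h4 : π (Sum.inr (k, σ0 i)) = π (Sum.inl i) := by rw [h3, hσ0]
    exact absurd (π.injective h4) (by simp)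
  -- σ0 is injective
  have hσinj : Function.Injective σ0 := by
    intro i1 i2 hEq
    by_contra hne
    have hcard : (Finset.univ : Finset (Fin n)).card ≤
        (((Finset.range (n + 1)).erase (i1.val + 1)).erase (i2.val + 1)).card := by
      apply Finset.card_le_card_of_injOn (fun k => f k (σ0 i1))
      · intro k _
        simp only [Finset.mem_coe, Finset.mem_erase, Finset.mem_range]
        refine ⟨?_, ?_, ?_⟩
        · have := havoid i2 k; rw [← hEq] at this; exact this
        · exact havoid i1 k
        · have := hle k (σ0 i1); omega
      · intro k1 _ k2 _ h; exact hinj _ k1 k2 h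
    rw [Finset.card_univ, Fintype.card_fin] at hcard
    have hmem2 : i2.val + 1 ∈ (Finset.range (n + 1)).erase (i1.val + 1) := by
      simp only [Finset.mem_erase, Finset.mem_range]
      exact ⟨fun hh => hne (Fin.ext (by omega)), by have := i2.isLt; omega⟩
    rw [Finset.card_erase_of_mem hmem2,
      Finset.card_erase_of_mem (by simp),
      Finset.card_range] at hcard
    have := i1.isLt
    omega
  have hσbij : Function.Bijective σ0 := Finite.injective_iff_bijective.mp hσinj
  set σ : Equiv.Perm (Fin n) := Equiv.ofBijective σ0 hσbij with hσdef
  have hσapp : ∀ i, σ i = σ0 i := fun i => rfl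
  have hstar : ∀ j : Fin n, σ0 (σ.symm j) = j := by
    intro j
    have := σ.apply_symm_apply j
    rwa [hσapp] at this
  -- chain lemma, above the pivot
  have chainB : ∀ (j : Fin n) (m : ℕ) (k : Fin n), k.val = m →
      (σ.symm j).val < k.val → f k j = k.val + 1 := by
    intro j m
    induction m using Nat.strong_induction_on with
    | _ m ih =>
      intro k hk hlt
      rcases hrange k j with h | h
      · exfalso
        rcases Nat.lt_or_ge ((σ.symm j).val + 1) k.val with h2 | h2
        · have hk1lt : k.val - 1 < n := by have := k.isLt; omega
          set k1 : Fin n := ⟨k.val - 1, hk1lt⟩ with hk1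
          have hfk1 : f k1 j = k1.val + 1 := ih (k.val - 1) (by omega) k1 rfl (by
            show (σ.symm j).val < k.val - 1; omega)
          have : k1 = k := hinj j k1 k (by rw [hfk1, h]; show (k.val - 1) + 1 = k.val; omega)
          have := congrArg Fin.val this
          simp only [hk1] at this
          omega
        · have hAv := havoid (σ.symm j) k
          rw [hstar] at hAv
          apply hAv
          rw [h]; omega
      · exact h
  -- chain lemma, below the pivot
  have chainA : ∀ (d : ℕ) (j : Fin n) (k : Fin n), k.val + d = (σ.symm j).val →
      f k j = k.val := by
    intro d
    induction d with
    | zero =>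
      intro j k hk
      rcases hrange k j with h | h
      · exact h
      · exfalso
        have hAv := havoid (σ.symm j) k
        rw [hstar] at hAv
        apply hAv
        rw [h]; omega
    | succ d ih =>
      intro j k hk
      rcases hrange k j with h | h
      · exact h
      · exfalso
        have hk2lt : k.val + 1 < n := by have := (σ.symm j).isLt; omega
        set k2 : Fin n := ⟨k.val + 1, hk2lt⟩ with hk2
        have hfk2 : f k2 j = k2.val := ih j k2 (by show (k.val + 1) + d = _; omega)
        have : k = k2 := hinj j k k2 (by rw [hfk2, h])
        have := congrArg Fin.val this
        simp only [hk2] at this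
        omega
  refine ⟨σ, ?_⟩
  apply Equiv.ext
  intro x
  rcases x with i | ⟨k, j⟩
  · rw [φ_apply]
    show π (Sum.inl i) = Sum.inr (i, σ i)
    rw [hσ0, hσapp]
  · rw [φ_apply]
    show π (Sum.inr (k, j)) =
      colOf j (if k.val ≤ (σ.symm j).val then k.val else k.val + 1)
    rw [hcol]
    congr 1
    split
    · exact chainA ((σ.symm j).val - k.val) j k (by omega)
    · exact chainB j k.val k rfl (by omega)

lemma perm'_M' (M : Matrix (Fin n) (Fin n) ℝ) : perm' (M' M) = perm' M := by
  classical
  unfold perm'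
  have hsub : (Finset.univ.image (φ (n := n))) ⊆ Finset.univ := Finset.subset_univ _
  have h0 : ∀ π ∈ (Finset.univ : Finset (Equiv.Perm (Idx n))),
      π ∉ Finset.univ.image (φ (n := n)) → ∏ x, M' M x (π x) = 0 := by
    intro π _ hπ
    by_contra hne
    obtain ⟨σ, rfl⟩ := surj M π hne
    exact hπ (Finset.mem_image.mpr ⟨σ, Finset.mem_univ _, rfl⟩)
  rw [← Finset.sum_subset hsub h0,
    Finset.sum_image (fun σ1 _ σ2 _ h => φ_inj h)]
  exact Finset.sum_congr rfl fun σ _ => prodA M σ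

lemma M'_01 (M : Matrix (Fin n) (Fin n) ℝ) (h01 : ∀ i j, M i j = 0 ∨ M i j = 1) :
    ∀ x y, M' M x y = 0 ∨ M' M x y = 1 := by
  rintro (i | ⟨k, j⟩) (i' | ⟨k', j'⟩)
  · left; rfl
  · show (if k' = i then M i j' else 0) = 0 ∨ (if k' = i then M i j' else 0) = 1
    split
    · exact h01 i j'
    · left; rfl
  · show (if k.val = 0 ∧ j = i' then (1:ℝ) else 0) = 0 ∨
      (if k.val = 0 ∧ j = i' then (1:ℝ) else 0) = 1
    split
    · right; rfl
    · left; rfl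
  · show (if j = j' ∧ (k' = k ∨ k'.val + 1 = k.val) then (1:ℝ) else 0) = 0 ∨
      (if j = j' ∧ (k' = k ∨ k'.val + 1 = k.val) then (1:ℝ) else 0) = 1
    split
    · right; rfl
    · left; rfl

lemma M'_col (M : Matrix (Fin n) (Fin n) ℝ) (y : Idx n) :
    (Finset.univ.filter fun x => M' M x y ≠ 0).card ≤ 3 := by
  classical
  rcases y with j | ⟨k', j'⟩
  · refine le_trans (Finset.card_le_one.mpr ?_) (by norm_num)
    intro a ha b hb
    have key : ∀ c ∈ Finset.univ.filter fun x => M' M x (Sum.inl j) ≠ 0,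
        ∃ k : Fin n, c = Sum.inr (k, j) ∧ k.val = 0 := by
      intro c hc
      have hc' := (Finset.mem_filter.mp hc).2
      rcases c with i | ⟨k, j''⟩
      · exact absurd rfl hc'
      · have : k.val = 0 ∧ j'' = j := by
          by_contra hcc
          apply hc'
          show (if k.val = 0 ∧ j'' = j then (1:ℝ) else 0) = 0
          simp [hcc]
        exact ⟨k, by rw [this.2], this.1⟩
    obtain ⟨ka, rfl, hka⟩ := key a ha
    obtain ⟨kb, rfl, hkb⟩ := key b hb
    have : ka = kb := Fin.ext (by omega)
    rw [this]
  · set x3 : Idx n := if h : k'.val + 1 < n then Sum.inr (⟨k'.val + 1, h⟩, j')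
      else Sum.inl k' with hx3
    have hsub : (Finset.univ.filter fun x => M' M x (Sum.inr (k', j')) ≠ 0) ⊆
        {Sum.inl k', Sum.inr (k', j'), x3} := by
      intro c hc
      have hc' := (Finset.mem_filter.mp hc).2
      simp only [Finset.mem_insert, Finset.mem_singleton]
      rcases c with i | ⟨k, j⟩
      · have hik : k' = i := by
          by_contra hcc
          apply hc'
          show (if k' = i then M i j' else 0) = 0
          simp [hcc]
        left; rw [hik]
      · have hcond : j = j' ∧ (k' = k ∨ k'.val + 1 = k.val) := by
          by_contra hcc
          apply hc'
          show (if j = j' ∧ (k' = k ∨ k'.val + 1 = k.val) then (1:ℝ) else 0) = 0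
          simp only [ite_eq_right_iff, one_ne_zero]
          intro h; exact absurd h hcc
        rcases hcond.2 with h | h
        · right; left; rw [hcond.1, h]
        · right; right
          rw [hx3]
          have hlt : k'.val + 1 < n := by have := k.isLt; omega
          rw [dif_pos hlt, hcond.1]
          have : (⟨k'.val + 1, hlt⟩ : Fin n) = k := Fin.ext (by simpa using h)
          rw [this]
    refine le_trans (Finset.card_le_card hsub) ?_
    refine le_trans (Finset.card_insert_le _ _) ?_
    have := Finset.card_insert_le (Sum.inr (k', j') : Idx n) ({x3} : Finset (Idx n))
    simp only [Finset.card_singleton] at this ⊢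
    omega

end PermSparse

/-- every `{0,1}` matrix `M` of size `n×n` admits a `{0,1}`
matrix `M'` of size at most `(n+n²)×(n+n²)` with the same permanent and with at
most three nonzero entries in every column. -/
theorem permanent_sparsification (n : ℕ) (M : Matrix (Fin n) (Fin n) ℝ)
    (h01 : ∀ i j, M i j = 0 ∨ M i j = 1) :
    ∃ m : ℕ, m ≤ n + n ^ 2 ∧ ∃ M' : Matrix (Fin m) (Fin m) ℝ,
      (∀ i j, M' i j = 0 ∨ M' i j = 1) ∧
      perm M' = perm M ∧
      ∀ j, (Finset.univ.filter (fun i => M' i j ≠ 0)).card ≤ 3 := by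
  classical
  refine ⟨n + n ^ 2, le_refl _, ?_⟩
  have hcard : Fintype.card (PermSparse.Idx n) = n + n ^ 2 := by
    simp [Fintype.card_sum, Fintype.card_prod]
    ring
  let e : PermSparse.Idx n ≃ Fin (n + n ^ 2) := Fintype.equivFinOfCardEq hcard
  refine ⟨(PermSparse.M' M).submatrix e.symm e.symm, ?_, ?_, ?_⟩
  · intro i j
    exact PermSparse.M'_01 M h01 (e.symm i) (e.symm j)
  · have h1 : perm ((PermSparse.M' M).submatrix e.symm e.symm)
        = PermSparse.perm' ((PermSparse.M' M).submatrix e.symm e.symm) := rfl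
    have h2 : perm M = PermSparse.perm' M := rfl
    rw [h1, h2, PermSparse.perm'_submatrix e.symm (PermSparse.M' M),
      PermSparse.perm'_M' M]
  · intro j
    have hb : (Finset.univ.filter
        (fun i => (PermSparse.M' M).submatrix e.symm e.symm i j ≠ 0)).card
        = (Finset.univ.filter (fun x => PermSparse.M' M x (e.symm j) ≠ 0)).card := by
      apply Finset.card_bij' (fun a _ => e.symm a) (fun x _ => e x)
      · intro a ha
        simp only [Finset.mem_filter, Finset.mem_univ, true_and] at ha ⊢
        exact ha
      · intro x hx
        simp only [Finset.mem_filter, Finset.mem_univ, true_and,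
          Matrix.submatrix_apply, Equiv.symm_apply_apply] at hx ⊢
        exact Finset.mem_filter.mpr ⟨Finset.mem_univ _, by simpa using hx⟩
      · intro a _; simp
      · intro x _; simp
    rw [hb]
    exact PermSparse.M'_col M (e.symm j)
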